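/- arXiv:1502.06906 — 6 statements merged into one kernel-verified Lean document; each statement's English description precedes it below -/
import Mathlib

section
/- A finite group G is an elementary abelian 2-group if and only if the number of cyclic subgroups of G equals |G|. -/
lemma aux_zpowers_isCyclic {G : Type*} [Group G] (x : G) :
    IsCyclic (Subgroup.zpowers x) := by
  refine ⟨⟨⟨x, Subgroup.mem_zpowers x⟩, fun z => ?_⟩⟩
  obtain ⟨k, hk⟩ := Subgroup.mem_zpowers_iff.mp z.2
  exact Subgroup.mem_zpowers_iff.mpr ⟨k, Subtype.ext (by simpa using hk)⟩

/-- A finite group `G` is an elementary abelian 2-group (every element squares to 1)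
iff the number of cyclic subgroups of `G` equals `|G|`. -/
theorem stmt_0 (G : Type*) [Group G] [Fintype G] :
    (∀ x : G, x ^ 2 = 1) ↔
      Nat.card {H : Subgroup G // IsCyclic H} = Nat.card G := by
  classical
  set f : G → {H : Subgroup G // IsCyclic H} :=
    fun x => ⟨Subgroup.zpowers x, aux_zpowers_isCyclic x⟩ with hf
  have hsurj : Function.Surjective f := by
    rintro ⟨H, hH⟩
    obtain ⟨g, hg⟩ := hH.exists_generator
    refine ⟨(g : G), Subtype.ext ?_⟩
    refine le_antisymm (Subgroup.zpowers_le.mpr g.2) ?_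
    intro x hx
    obtain ⟨k, hk⟩ := Subgroup.mem_zpowers_iff.mp (hg ⟨x, hx⟩)
    exact Subgroup.mem_zpowers_iff.mpr ⟨k, by
      have := congrArg (Subtype.val) hk
      simpa using this⟩
  have hinj_iff : Function.Injective f ↔ ∀ x : G, x ^ 2 = 1 := by
    constructor
    · intro hinj x
      have : f x = f x⁻¹ := Subtype.ext (by simp [hf])
      have hx : x = x⁻¹ := hinj this
      rw [pow_two]
      nth_rewrite 2 [hx]
      exact mul_inv_cancel x
    · intro h x y hxy
      have hxy' : Subgroup.zpowers x = Subgroup.zpowers y := congrArg Subtype.val hxy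
      have hy : y ∈ Subgroup.zpowers x := hxy' ▸ Subgroup.mem_zpowers y
      have hx : x ∈ Subgroup.zpowers y := hxy'.symm ▸ Subgroup.mem_zpowers x
      obtain ⟨k, hk⟩ := Subgroup.mem_zpowers_iff.mp hy
      obtain ⟨m, hm⟩ := Subgroup.mem_zpowers_iff.mp hx
      have hx2 : (x : G) ^ (2:ℤ) = 1 := by exact_mod_cast h x
      have hy2 : (y : G) ^ (2:ℤ) = 1 := by exact_mod_cast h y
      have hyopt : y = 1 ∨ y = x := by
        rcases Int.even_or_odd k with ⟨n, hn⟩ | ⟨n, hn⟩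
        · left
          rw [← hk, hn, ← two_mul, zpow_mul, hx2, one_zpow]
        · right
          rw [← hk, hn, zpow_add, zpow_mul, hx2, one_zpow, one_mul, zpow_one]
      rcases hyopt with rfl | rfl
      · rw [← hm, one_zpow]
      · rfl
  constructor
  · intro h
    have hinj : Function.Injective f := hinj_iff.mpr h
    exact (Nat.card_eq_of_bijective f ⟨hinj, hsurj⟩).symm
  · intro hcard
    refine hinj_iff.mp ?_
    have hFt : Fintype {H : Subgroup G // IsCyclic H} := Fintype.ofFinite _
    rw [Nat.card_eq_fintype_card, Nat.card_eq_fintype_card] at hcard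
    exact ((Fintype.bijective_iff_surjective_and_card f).mpr ⟨hsurj, hcard.symm⟩).1
end

section
/- Let G be a finite group. Then the number of cyclic subgroups of G equals |G| - 1 if and only if G is isomorphic to one of: the cyclic group Z/3, the cyclic group Z/4, the symmetric group S_3, or the dihedral group D_8 of order 8. -/
set_option linter.unusedSectionVars false
set_option maxHeartbeats 1000000

namespace Stmt1Aux

variable {G : Type*} [Group G]

lemma sq_one_mem_zpowers {g x : G} (hg : g * g = 1) (hx : x ∈ Subgroup.zpowers g) :
    x = 1 ∨ x = g := by
  rcases Subgroup.mem_zpowers_iff.mp hx with ⟨k, rfl⟩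
  have h2 : g ^ (2 : ℤ) = 1 := by rw [zpow_two]; exact hg
  rcases Int.even_or_odd k with ⟨m, hm⟩ | ⟨m, hm⟩
  · left; rw [hm, ← two_mul, zpow_mul, h2, one_zpow]
  · right; rw [hm, zpow_add, zpow_mul, h2, one_zpow, one_mul, zpow_one]

lemma isCyclic_iff_range (H : Subgroup G) :
    IsCyclic H ↔ ∃ g : G, Subgroup.zpowers g = H := by
  constructor
  · rintro hH
    obtain ⟨g, hg⟩ := hH.exists_generator
    refine ⟨(g : G), le_antisymm ?_ ?_⟩
    · rw [Subgroup.zpowers_le]; exact g.2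
    · intro x hx
      rcases Subgroup.mem_zpowers_iff.mp (hg ⟨x, hx⟩) with ⟨k, hk⟩
      exact Subgroup.mem_zpowers_iff.mpr ⟨k, by
        have := congrArg (Subtype.val) hk
        simpa using this⟩
  · rintro ⟨g, rfl⟩
    refine ⟨⟨⟨g, Subgroup.mem_zpowers g⟩, fun x => ?_⟩⟩
    rcases Subgroup.mem_zpowers_iff.mp x.2 with ⟨k, hk⟩
    exact Subgroup.mem_zpowers_iff.mpr ⟨k, Subtype.ext (by simpa using hk)⟩

lemma ne_inv_of_sq {a : G} (ha : a * a ≠ 1) : a ≠ a⁻¹ := by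
  intro e; apply ha; nth_rewrite 2 [e]; exact mul_inv_cancel a

lemma inv_sq_ne {a : G} (ha : a * a ≠ 1) : a⁻¹ * a⁻¹ ≠ 1 := by
  intro e; apply ha
  have := congrArg (fun x => x⁻¹) e
  simpa [mul_inv_rev] using this

lemma inj0 {g h : G} (hg : g * g = 1) (hh : h * h = 1)
    (e : Subgroup.zpowers g = Subgroup.zpowers h) : g = h := by
  have h1 : h ∈ Subgroup.zpowers g := e ▸ Subgroup.mem_zpowers h
  have h2 : g ∈ Subgroup.zpowers h := e ▸ Subgroup.mem_zpowers g
  rcases sq_one_mem_zpowers hg h1 with rfl | rfl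
  · rcases sq_one_mem_zpowers hh h2 with rfl | rfl <;> rfl
  · rfl

lemma sq_ne_of_eq {g h : G} (hg : g * g ≠ 1)
    (e : Subgroup.zpowers g = Subgroup.zpowers h) : h * h ≠ 1 := by
  intro hh
  have h2 : g ∈ Subgroup.zpowers h := e ▸ Subgroup.mem_zpowers g
  rcases sq_one_mem_zpowers hh h2 with rfl | rfl
  · exact hg (one_mul 1)
  · exact hg hh

lemma count_iff [Fintype G] :
    Nat.card {H : Subgroup G // IsCyclic H} = Nat.card G - 1 ↔
      Nat.card {g : G // g * g ≠ 1} = 2 := by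
  classical
  set f : G → Subgroup G := fun g => Subgroup.zpowers g with hf
  have hfinv : ∀ a : G, f a⁻¹ = f a := fun a => Subgroup.zpowers_inv (g := a)
  have hcard1 : Nat.card {H : Subgroup G // IsCyclic H} = (Finset.univ.image f).card := by
    have e1 : {H : Subgroup G // IsCyclic H} ≃ (Set.range f) := by
      refine Equiv.subtypeEquivRight fun H => ?_
      rw [isCyclic_iff_range]
      exact ⟨fun ⟨g, hg⟩ => ⟨g, hg⟩, fun ⟨g, hg⟩ => ⟨g, hg⟩⟩
    rw [Nat.card_congr e1]
    have h2 : Set.range f = ↑(Finset.univ.image f) := by ext H; simp [hf]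
    rw [h2, Nat.card_coe_set_eq, Set.ncard_coe_finset]
  have hcard2 : Nat.card G = (Finset.univ : Finset G).card := by
    rw [Nat.card_eq_fintype_card, Finset.card_univ]
  have hcard3 : Nat.card {g : G // g * g ≠ 1} =
      (Finset.univ.filter (fun g : G => g * g ≠ 1)).card := by
    rw [Nat.card_eq_fintype_card, Fintype.card_subtype]
  rw [hcard1, hcard2, hcard3]
  constructor
  · intro h
    by_cases hall : ∀ g : G, g * g = 1
    · exfalso
      have hinj : Set.InjOn f (Finset.univ : Finset G) := by
        intro g _ h' _ e
        exact inj0 (hall g) (hall h') e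
      rw [Finset.card_image_of_injOn hinj] at h
      have : 0 < (Finset.univ : Finset G).card := Finset.card_pos.mpr ⟨1, Finset.mem_univ 1⟩
      omega
    · push_neg at hall
      obtain ⟨a, ha⟩ := hall
      have hane : a ≠ a⁻¹ := ne_inv_of_sq ha
      have hsub : Finset.univ.filter (fun g : G => g * g ≠ 1) = {a, a⁻¹} := by
        apply Finset.Subset.antisymm
        · intro b hb
          have hb2 : b * b ≠ 1 := (Finset.mem_filter.mp hb).2
          by_contra hbm
          simp only [Finset.mem_insert, Finset.mem_singleton] at hbm
          push_neg at hbm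
          obtain ⟨hb1, hb2'⟩ := hbm
          have hbia : b⁻¹ ≠ a⁻¹ := fun e => hb1 (inv_injective e)
          have hbia' : b⁻¹ ≠ a := fun e => hb2' (by rw [← e, inv_inv])
          have hbib : b⁻¹ ≠ b := fun e => hb2 (by nth_rewrite 1 [← e]; exact inv_mul_cancel b)
          set s := ((Finset.univ : Finset G).erase a⁻¹).erase b⁻¹ with hs
          have has : a ∈ s := by
            simp only [hs, Finset.mem_erase, Finset.mem_univ, and_true]
            exact ⟨Ne.symm hbia', hane⟩
          have hbs : b ∈ s := by
            simp only [hs, Finset.mem_erase, Finset.mem_univ, and_true]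
            exact ⟨Ne.symm hbib, hb2'⟩
          have himage : (Finset.univ.image f) ⊆ s.image f := by
            intro H hH
            rcases Finset.mem_image.mp hH with ⟨g, _, rfl⟩
            by_cases hga : g = a⁻¹
            · exact Finset.mem_image.mpr ⟨a, has, by rw [hga, hfinv]⟩
            · by_cases hgb : g = b⁻¹
              · exact Finset.mem_image.mpr ⟨b, hbs, by rw [hgb, hfinv]⟩
              · exact Finset.mem_image.mpr ⟨g, by simp [hs, hga, hgb], rfl⟩
          have hcards : s.card = (Finset.univ : Finset G).card - 2 := by
            rw [hs, Finset.card_erase_of_mem, Finset.card_erase_of_mem]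
            · omega
            · exact Finset.mem_univ _
            · exact Finset.mem_erase.mpr ⟨hbia, Finset.mem_univ _⟩
          have hle : (Finset.univ.image f).card ≤ (Finset.univ : Finset G).card - 2 := by
            calc (Finset.univ.image f).card ≤ (s.image f).card := Finset.card_le_card himage
              _ ≤ s.card := Finset.card_image_le
              _ = _ := hcards
          have h2 : 2 ≤ (Finset.univ : Finset G).card :=
            Finset.one_lt_card.mpr ⟨a, Finset.mem_univ a, a⁻¹, Finset.mem_univ _, hane⟩
          omega
        · intro b hb
          simp only [Finset.mem_insert, Finset.mem_singleton] at hb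
          rcases hb with rfl | rfl
          · simp [ha]
          · simp only [Finset.mem_filter, Finset.mem_univ, true_and]
            exact inv_sq_ne ha
      rw [hsub, Finset.card_insert_of_notMem (by simpa using hane), Finset.card_singleton]
  · intro h
    obtain ⟨a, ha⟩ : ∃ a : G, a * a ≠ 1 := by
      by_contra hc
      push_neg at hc
      rw [Finset.filter_false_of_mem (fun g _ => not_not.mpr (hc g)), Finset.card_empty] at h
      omega
    have hane : a ≠ a⁻¹ := ne_inv_of_sq ha
    have hmem : ({a, a⁻¹} : Finset G) ⊆ Finset.univ.filter (fun g : G => g * g ≠ 1) := by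
      intro b hb
      simp only [Finset.mem_insert, Finset.mem_singleton] at hb
      rcases hb with rfl | rfl
      · simp [ha]
      · simp only [Finset.mem_filter, Finset.mem_univ, true_and]
        exact inv_sq_ne ha
    have hset : Finset.univ.filter (fun g : G => g * g ≠ 1) = {a, a⁻¹} := by
      refine (Finset.eq_of_subset_of_card_le hmem ?_).symm
      rw [h, Finset.card_insert_of_notMem (by simpa using hane), Finset.card_singleton]
    have hone : ∀ g : G, g * g ≠ 1 → g = a ∨ g = a⁻¹ := by
      intro g hg
      have hg' : g ∈ Finset.univ.filter (fun g : G => g * g ≠ 1) := by simp [hg]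
      rw [hset] at hg'
      simpa using hg'
    have himg : Finset.univ.image f = ((Finset.univ : Finset G).erase a⁻¹).image f := by
      apply Finset.Subset.antisymm
      · intro H hH
        rcases Finset.mem_image.mp hH with ⟨g, _, rfl⟩
        by_cases hga : g = a⁻¹
        · exact Finset.mem_image.mpr ⟨a, Finset.mem_erase.mpr ⟨hane, Finset.mem_univ _⟩, by rw [hga, hfinv]⟩
        · exact Finset.mem_image.mpr ⟨g, by simp [hga], rfl⟩
      · exact Finset.image_subset_image (Finset.erase_subset _ _)
    have hinj : Set.InjOn f (((Finset.univ : Finset G).erase a⁻¹) : Finset G) := by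
      intro g hg h' hh' e
      simp only [Finset.coe_erase, Set.mem_diff, Set.mem_singleton_iff] at hg hh'
      by_cases hg2 : g * g = 1
      · by_cases hh2 : h' * h' = 1
        · exact inj0 hg2 hh2 e
        · exact absurd hg2 (sq_ne_of_eq hh2 e.symm)
      · have hh2 : h' * h' ≠ 1 := sq_ne_of_eq hg2 e
        rcases hone g hg2 with rfl | rfl
        · rcases hone h' hh2 with rfl | rfl
          · rfl
          · exact absurd rfl hh'.2
        · exact absurd rfl hg.2
    rw [himg, Finset.card_image_of_injOn hinj, Finset.card_erase_of_mem (Finset.mem_univ _)]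

section
variable {n : ℕ} [NeZero n] {a : G} (hn : orderOf a = n)
include hn

lemma pow_val_add (i j : ZMod n) : a ^ (i + j).val = a ^ i.val * a ^ j.val := by
  subst hn; rw [ZMod.val_add, pow_mod_orderOf, pow_add]

lemma pow_val_inj {i j : ZMod n} (h : a ^ i.val = a ^ j.val) : i = j := by
  apply ZMod.val_injective
  have h2 := pow_eq_pow_iff_modEq.mp h
  rw [hn] at h2
  rwa [Nat.ModEq, Nat.mod_eq_of_lt (ZMod.val_lt i), Nat.mod_eq_of_lt (ZMod.val_lt j)] at h2

lemma pow_val_natCast (k : ℕ) : a ^ ((k : ZMod n)).val = a ^ k := by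
  subst hn; rw [ZMod.val_natCast, pow_mod_orderOf]

end

lemma cyclic_iso [Fintype G] {a : G} {n : ℕ} (hpos : 0 < n) (hn : orderOf a = n)
    (htop : ∀ x : G, x ∈ Subgroup.zpowers a) :
    Nonempty (G ≃* Multiplicative (ZMod n)) := by
  haveI : NeZero n := ⟨hpos.ne'⟩
  set ψ : Multiplicative (ZMod n) → G := fun i => a ^ (Multiplicative.toAdd i).val with hψ
  have hmul : ∀ i j, ψ (i * j) = ψ i * ψ j := fun i j => pow_val_add hn _ _
  have hinj : Function.Injective ψ := fun i j h => by
    have := pow_val_inj hn h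
    exact Multiplicative.toAdd.injective this
  have hsurj : Function.Surjective ψ := by
    intro s
    rcases (isOfFinOrder_of_finite a).mem_powers_iff_mem_zpowers.mpr (htop s) with ⟨k, hk⟩
    refine ⟨Multiplicative.ofAdd ((k : ZMod n)), ?_⟩
    show a ^ ((k : ZMod n)).val = s
    rw [pow_val_natCast hn k]; exact hk
  exact ⟨(MulEquiv.ofBijective (MonoidHom.mk' ψ hmul) ⟨hinj, hsurj⟩).symm⟩

lemma dihedral_iso [Fintype G] {a t : G} (ha : a * a ≠ 1)
    (hone : ∀ g : G, g * g ≠ 1 → g = a ∨ g = a⁻¹)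
    (ht : t ∉ Subgroup.zpowers a) {n : ℕ} (hn : orderOf a = n) :
    Nonempty (G ≃* DihedralGroup n) := by
  haveI : NeZero n := ⟨by
    intro h; subst h
    exact (orderOf_eq_zero_iff.mp hn) (isOfFinOrder_of_finite a)⟩
  have ha1 : a ≠ 1 := fun h => ha (by rw [h, one_mul])
  have hinv1 : ∀ s : G, s ∉ Subgroup.zpowers a → s * s = 1 := by
    intro s hs
    by_contra h2
    rcases hone s h2 with hc | hc
    · exact hs (hc ▸ Subgroup.mem_zpowers a)
    · exact hs (hc ▸ Subgroup.inv_mem _ (Subgroup.mem_zpowers a))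
  have hconj : ∀ s : G, s ∉ Subgroup.zpowers a → s * a * s = a⁻¹ := by
    intro s hs
    have hss := hinv1 s hs
    have hsinv : s⁻¹ = s := inv_eq_of_mul_eq_one_right hss
    have hs1 : s ≠ 1 := fun h => hs (h ▸ Subgroup.one_mem _)
    have hcc : (s * a * s) * (s * a * s) ≠ 1 := by
      intro h
      apply ha
      have e : (s * a * s) * (s * a * s) = s * (a * a) * s := by
        calc (s * a * s) * (s * a * s) = s * a * (s * s) * a * s := by group
          _ = s * (a * a) * s := by rw [hss]; group
      rw [e] at h
      calc a * a = s⁻¹ * (s * (a * a) * s) * s⁻¹ := by group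
        _ = 1 := by rw [h, hsinv, mul_one]; exact hss
    rcases hone _ hcc with hc | hc
    · exfalso
      have hsa : (s * a) * (s * a) ≠ 1 := by
        have e : (s * a) * (s * a) = (s * a * s) * a := by group
        rw [e, hc]; exact ha
      rcases hone _ hsa with hd | hd
      · have : s * a = 1 * a := by rw [hd, one_mul]
        exact hs1 (mul_right_cancel this)
      · apply hs
        have hse : s = a⁻¹ * a⁻¹ := by
          have := congrArg (fun x => x * a⁻¹) hd
          simpa [mul_assoc] using this
        rw [hse]
        exact Subgroup.mul_mem _ (Subgroup.inv_mem _ (Subgroup.mem_zpowers a))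
          (Subgroup.inv_mem _ (Subgroup.mem_zpowers a))
    · exact hc
  have htt : t * t = 1 := hinv1 t ht
  have htinv : t⁻¹ = t := inv_eq_of_mul_eq_one_right htt
  have hta : t * a * t = a⁻¹ := hconj t ht
  have hcover : ∀ s : G, s ∉ Subgroup.zpowers a → t * s ∈ Subgroup.zpowers a := by
    intro s hs
    have hss := hinv1 s hs
    have hsinv : s⁻¹ = s := inv_eq_of_mul_eq_one_right hss
    set u := t * s with hu
    have hcomm : u * a = a * u := by
      have h1 : s * a * s = a⁻¹ := hconj s hs
      have h2 : u * a * u⁻¹ = a := by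
        rw [hu]
        calc t * s * a * (t * s)⁻¹ = t * (s * a * s⁻¹) * t⁻¹ := by group
          _ = t * (s * a * s) * t := by rw [hsinv, htinv]
          _ = t * a⁻¹ * t := by rw [h1]
          _ = (t⁻¹ * a * t⁻¹)⁻¹ := by group
          _ = (t * a * t)⁻¹ := by rw [htinv]
          _ = a := by rw [hta, inv_inv]
      have := congrArg (fun x => x * u) h2
      simpa [mul_assoc] using this
    by_cases hu2 : u * u = 1
    · by_cases hu1 : u = 1
      · rw [hu1]; exact Subgroup.one_mem _
      · have hv : (u * a) * (u * a) ≠ 1 := by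
          have e : (u * a) * (u * a) = (u * u) * (a * a) := by
            calc (u * a) * (u * a) = u * (a * u) * a := by group
              _ = u * (u * a) * a := by rw [← hcomm]
              _ = (u * u) * (a * a) := by group
          rw [e, hu2, one_mul]
          exact ha
        rcases hone _ hv with hd | hd
        · have : u * a = 1 * a := by rw [hd, one_mul]
          exact absurd (mul_right_cancel this) hu1
        · have hue : u = a⁻¹ * a⁻¹ := by
            have := congrArg (fun x => x * a⁻¹) hd
            simpa [mul_assoc] using this
          rw [hue]
          exact Subgroup.mul_mem _ (Subgroup.inv_mem _ (Subgroup.mem_zpowers a))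
            (Subgroup.inv_mem _ (Subgroup.mem_zpowers a))
    · rcases hone _ hu2 with hc | hc
      · rw [hc]; exact Subgroup.mem_zpowers a
      · rw [hc]; exact Subgroup.inv_mem _ (Subgroup.mem_zpowers a)
  have hat : ∀ k : ℕ, a ^ k * t = t * (a ^ k)⁻¹ := by
    intro k
    induction k with
    | zero => simp
    | succ m ih =>
      have hax : a * t = t * a⁻¹ := by
        have h5 := congrArg (fun x => t * x) hta
        simpa [← mul_assoc, htt, one_mul] using h5
      calc a ^ (m + 1) * t = a ^ m * (a * t) := by rw [pow_succ, mul_assoc]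
        _ = a ^ m * t * a⁻¹ := by rw [hax, mul_assoc]
        _ = t * (a ^ m)⁻¹ * a⁻¹ := by rw [ih]
        _ = t * (a ^ (m + 1))⁻¹ := by rw [pow_succ', mul_inv_rev, mul_assoc]
  set φ : ZMod n → G := fun i => a ^ i.val with hφ
  have hφadd : ∀ i j, φ (i + j) = φ i * φ j := fun i j => pow_val_add hn i j
  have hφneg : ∀ i, φ (-i) = (φ i)⁻¹ := by
    intro i
    have h0 : φ (-i) * φ i = 1 := by
      rw [← hφadd, neg_add_cancel, hφ]; simp
    exact eq_inv_of_mul_eq_one_left h0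
  have hφt : ∀ i, φ i * t = t * (φ i)⁻¹ := fun i => hat _
  have hφmem : ∀ i, φ i ∈ Subgroup.zpowers a := fun i => pow_mem (Subgroup.mem_zpowers a) _
  set f : DihedralGroup n → G := fun x =>
    match x with
    | .r i => φ i
    | .sr i => t * φ i
    with hfdef
  have hfr : ∀ i, f (.r i) = φ i := fun i => rfl
  have hfsr : ∀ i, f (.sr i) = t * φ i := fun i => rfl
  have hmul : ∀ x y : DihedralGroup n, f (x * y) = f x * f y := by
    intro x y
    rcases x with i | i <;> rcases y with j | j
    · rw [DihedralGroup.r_mul_r, hfr, hfr, hfr, hφadd]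
    · have h6 : φ i * (t * φ j) = t * ((φ i)⁻¹ * φ j) := by
        rw [← mul_assoc, hφt, mul_assoc]
      rw [DihedralGroup.r_mul_sr, hfr, hfsr, hfsr, h6, sub_eq_neg_add, hφadd, hφneg]
    · rw [DihedralGroup.sr_mul_r, hfsr, hfr, hfsr, hφadd, mul_assoc]
    · have h7 : (t * φ i) * (t * φ j) = (φ i)⁻¹ * φ j := by
        calc (t * φ i) * (t * φ j) = t * (φ i * t) * φ j := by group
          _ = t * (t * (φ i)⁻¹) * φ j := by rw [hφt]
          _ = (t * t) * ((φ i)⁻¹ * φ j) := by group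
          _ = (φ i)⁻¹ * φ j := by rw [htt, one_mul]
      rw [DihedralGroup.sr_mul_sr, hfsr, hfsr, hfr, h7, sub_eq_neg_add, hφadd, hφneg]
  have hinjf : Function.Injective f := by
    intro x y hxy
    rcases x with i | i <;> rcases y with j | j
    · rw [hfr, hfr] at hxy
      exact congrArg DihedralGroup.r (pow_val_inj hn hxy)
    · exfalso
      apply ht
      rw [hfr, hfsr] at hxy
      have h8 : t = φ i * (φ j)⁻¹ := by rw [hxy]; group
      rw [h8]
      exact Subgroup.mul_mem _ (hφmem i) (Subgroup.inv_mem _ (hφmem j))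
    · exfalso
      apply ht
      rw [hfsr, hfr] at hxy
      have h8 : t = φ j * (φ i)⁻¹ := by rw [← hxy]; group
      rw [h8]
      exact Subgroup.mul_mem _ (hφmem j) (Subgroup.inv_mem _ (hφmem i))
    · rw [hfsr, hfsr] at hxy
      exact congrArg DihedralGroup.sr (pow_val_inj hn (mul_left_cancel hxy))
  have hsurjf : Function.Surjective f := by
    intro s
    by_cases hs : s ∈ Subgroup.zpowers a
    · rcases (isOfFinOrder_of_finite a).mem_powers_iff_mem_zpowers.mpr hs with ⟨k, hk⟩
      refine ⟨.r (k : ZMod n), ?_⟩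
      rw [hfr]
      show a ^ ((k : ZMod n)).val = s
      rw [pow_val_natCast hn]; exact hk
    · rcases (isOfFinOrder_of_finite a).mem_powers_iff_mem_zpowers.mpr
        (hcover s hs) with ⟨k, hk⟩
      refine ⟨.sr (k : ZMod n), ?_⟩
      rw [hfsr]
      have h9 : φ ((k : ZMod n)) = t * s := by
        show a ^ ((k : ZMod n)).val = t * s
        rw [pow_val_natCast hn]; exact hk
      rw [h9, ← mul_assoc, htt, one_mul]
  exact ⟨(MulEquiv.ofBijective (MonoidHom.mk' f hmul) ⟨hinjf, hsurjf⟩).symm⟩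


def d3f : DihedralGroup 3 → Equiv.Perm (Fin 3) := fun x =>
  match x with
  | .r i => (finRotate 3) ^ i.val
  | .sr i => Equiv.swap 0 1 * (finRotate 3) ^ i.val

lemma d3f_mul : ∀ x y : DihedralGroup 3, d3f (x * y) = d3f x * d3f y := by decide
lemma d3f_inj : Function.Injective d3f := by decide

noncomputable def d3equiv : DihedralGroup 3 ≃* Equiv.Perm (Fin 3) :=
  MulEquiv.ofBijective (MonoidHom.mk' d3f d3f_mul)
    ((Fintype.bijective_iff_injective_and_card _).mpr ⟨d3f_inj, by decide⟩)

lemma exists_special [Fintype G] (h : Nat.card {g : G // g * g ≠ 1} = 2) :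
    ∃ a : G, a * a ≠ 1 ∧ ∀ g : G, g * g ≠ 1 → g = a ∨ g = a⁻¹ := by
  classical
  rw [Nat.card_eq_fintype_card, Fintype.card_subtype] at h
  obtain ⟨a, ha⟩ : ∃ a : G, a * a ≠ 1 := by
    by_contra hc
    push_neg at hc
    rw [Finset.filter_false_of_mem (fun g _ => not_not.mpr (hc g)), Finset.card_empty] at h
    omega
  have hane : a ≠ a⁻¹ := ne_inv_of_sq ha
  have hmem : ({a, a⁻¹} : Finset G) ⊆ Finset.univ.filter (fun g : G => g * g ≠ 1) := by
    intro b hb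
    simp only [Finset.mem_insert, Finset.mem_singleton] at hb
    rcases hb with rfl | rfl
    · simp [ha]
    · simp only [Finset.mem_filter, Finset.mem_univ, true_and]
      exact inv_sq_ne ha
  have hset : Finset.univ.filter (fun g : G => g * g ≠ 1) = {a, a⁻¹} := by
    refine (Finset.eq_of_subset_of_card_le hmem ?_).symm
    rw [h, Finset.card_insert_of_notMem (by simpa using hane), Finset.card_singleton]
  refine ⟨a, ha, fun g hg => ?_⟩
  have hg' : g ∈ Finset.univ.filter (fun g : G => g * g ≠ 1) := by simp [hg]
  rw [hset] at hg'
  simpa using hg'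

lemma transport {K : Type*} [Group K] (e : G ≃* K) :
    Nat.card {g : G // g * g ≠ 1} = Nat.card {k : K // k * k ≠ 1} :=
  Nat.card_congr (e.toEquiv.subtypeEquiv (fun g => by
    show g * g ≠ 1 ↔ e g * e g ≠ 1
    rw [← map_mul]
    exact not_congr (MulEquiv.map_eq_one_iff e).symm))

end Stmt1Aux

open Stmt1Aux in
theorem stmt_1 (G : Type*) [Group G] [Fintype G] :
    Nat.card {H : Subgroup G // IsCyclic H} = Nat.card G - 1 ↔
      (Nonempty (G ≃* Multiplicative (ZMod 3)) ∨
       Nonempty (G ≃* Multiplicative (ZMod 4)) ∨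
       Nonempty (G ≃* Equiv.Perm (Fin 3)) ∨
       Nonempty (G ≃* DihedralGroup 4)) := by
  rw [count_iff]
  constructor
  · intro h
    obtain ⟨a, ha, hone⟩ := exists_special h
    have ha1 : a ≠ 1 := fun h' => ha (by rw [h', one_mul])
    have hord : orderOf a = 3 ∨ orderOf a = 4 := by
      by_cases h3 : a * (a * a) = 1
      · left
        haveI : Fact (Nat.Prime 3) := ⟨by norm_num⟩
        refine orderOf_eq_prime ?_ ha1
        rw [pow_succ, pow_two, mul_assoc]
        exact h3
      · right
        have h44 : (a * a) * (a * a) = 1 := by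
          by_contra hneq
          rcases hone _ hneq with hc | hc
          · exact ha1 (mul_right_cancel (show a * a = 1 * a from by rw [hc, one_mul]))
          · exact h3 (by rw [show a * (a * a) = a * (a * a) from rfl, hc, mul_inv_cancel])
        have hpow : a ^ 4 = 1 := by
          rw [show (4:ℕ) = 2 + 2 from rfl, pow_add, pow_two]
          exact h44
        have hdvd : orderOf a ∣ 4 := orderOf_dvd_of_pow_eq_one hpow
        have hne1 : orderOf a ≠ 1 := fun h' => ha1 (orderOf_eq_one_iff.mp h')
        have hne2 : orderOf a ≠ 2 := by
          intro h'
          apply ha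
          have := pow_orderOf_eq_one a
          rwa [h', pow_two] at this
        have hle : orderOf a ≤ 4 := Nat.le_of_dvd (by norm_num) hdvd
        have hpos : 0 < orderOf a := orderOf_pos a
        have hne3 : orderOf a ≠ 3 := by
          intro h'
          rw [h'] at hdvd
          norm_num at hdvd
        omega
    by_cases htop : ∀ x : G, x ∈ Subgroup.zpowers a
    · rcases hord with h3 | h4
      · exact Or.inl (cyclic_iso (by norm_num) h3 htop)
      · exact Or.inr (Or.inl (cyclic_iso (by norm_num) h4 htop))
    · push_neg at htop
      obtain ⟨t, ht⟩ := htop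
      rcases hord with h3 | h4
      · obtain ⟨e⟩ := dihedral_iso ha hone ht h3
        exact Or.inr (Or.inr (Or.inl ⟨e.trans d3equiv⟩))
      · obtain ⟨e⟩ := dihedral_iso ha hone ht h4
        exact Or.inr (Or.inr (Or.inr ⟨e⟩))
  · intro h
    rcases h with h | h | h | h <;> obtain ⟨e⟩ := h
    · rw [transport e, Nat.card_eq_fintype_card, Fintype.card_subtype]; decide
    · rw [transport e, Nat.card_eq_fintype_card, Fintype.card_subtype]; decide
    · rw [transport e, Nat.card_eq_fintype_card, Fintype.card_subtype]; decide
    · rw [transport e, Nat.card_eq_fintype_card, Fintype.card_subtype]; decide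
end

section
/- Let G be a finite group such that |C(G)| = |G| - 1. Then there exists exactly one cyclic subgroup H of G with φ(|H|) = 2 (equivalently |H| ∈ {3,4,6}), and every other cyclic subgroup of G has order 1 or 2. -/
open Subgroup

lemma totient_two_mem {n : ℕ} (h : n.totient = 2) : n ∈ ({3,4,6} : Set ℕ) := by
  have hdvd : n ∣ 12 := by
    rw [Nat.dvd_iff_prime_pow_dvd_dvd]
    intro p k hp hpk
    have hpn : Nat.Prime p := hp
    have h2 : (p ^ k).totient ∣ 2 := h ▸ Nat.totient_dvd_of_dvd hpk
    rcases Nat.eq_zero_or_pos k with rfl | hk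
    · simpa using one_dvd _
    rw [Nat.totient_prime_pow hpn hk] at h2
    have hp2 : p - 1 ∣ 2 := dvd_trans (Dvd.intro_left _ rfl) h2
    have hpk2 : p ^ (k - 1) ∣ 2 := dvd_trans (Dvd.intro _ rfl) h2
    have hple : p ≤ 3 := by
      have := Nat.le_of_dvd (by norm_num) hp2
      have := hpn.two_le
      omega
    have hp2' := hpn.two_le
    interval_cases p
    · have hk2 : k ≤ 2 := by
        by_contra hc
        have h4 : (2:ℕ)^2 ∣ 2^(k-1) := pow_dvd_pow 2 (by omega)
        have := Nat.le_of_dvd (by norm_num) (h4.trans hpk2)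
        omega
      exact dvd_trans (pow_dvd_pow 2 hk2) (by norm_num)
    · have hk1 : k = 1 := by
        by_contra hc
        have h3 : (3:ℕ) ∣ 3^(k-1) := dvd_pow_self 3 (by omega)
        have := Nat.le_of_dvd (by norm_num) (h3.trans hpk2)
        omega
      subst hk1; norm_num
  have hle := Nat.le_of_dvd (by norm_num) hdvd
  have hne : n ≠ 0 := by rintro rfl; simp at h
  interval_cases n <;> revert h hdvd <;> decide

lemma zpowers_isCyclic' {G : Type*} [Group G] (g : G) : IsCyclic (Subgroup.zpowers g) := by
  refine ⟨⟨⟨g, mem_zpowers g⟩, fun x => ?_⟩⟩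
  obtain ⟨k, hk⟩ := x.2
  exact ⟨k, Subtype.ext (by simpa using hk)⟩

lemma fiber_card {G : Type*} [Group G] [Fintype G] (H : Subgroup G) (hH : IsCyclic H) :
    Nat.card {g : G // Subgroup.zpowers g = H} = Nat.totient (Nat.card H) := by
  classical
  have key : ∀ g : G, Subgroup.zpowers g = H ↔ g ∈ H ∧ orderOf g = Nat.card H := by
    intro g
    constructor
    · rintro rfl
      exact ⟨mem_zpowers g, (Nat.card_zpowers g).symm⟩
    · rintro ⟨hg, ho⟩
      exact Subgroup.eq_of_le_of_card_ge (zpowers_le.2 hg) (by rw [Nat.card_zpowers, ho])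
  have e : {g : G // Subgroup.zpowers g = H} ≃ {a : H // orderOf a = Fintype.card H} :=
    { toFun := fun g => ⟨⟨g.1, ((key g.1).1 g.2).1⟩, by
        rw [Subgroup.orderOf_mk, ((key g.1).1 g.2).2, Nat.card_eq_fintype_card]⟩
      invFun := fun a => ⟨(a.1 : G), (key (a.1 : G)).2 ⟨a.1.2, by
        rw [Subgroup.orderOf_coe, a.2, Nat.card_eq_fintype_card]⟩⟩
      left_inv := fun g => Subtype.ext rfl
      right_inv := fun a => Subtype.ext (Subtype.ext rfl) }
  rw [Nat.card_congr e, Nat.card_eq_fintype_card, Fintype.card_subtype,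
    Nat.card_eq_fintype_card]
  have := IsCyclic.card_orderOf_eq_totient (α := H) (d := Fintype.card H) dvd_rfl
  simpa using this

theorem stmt_4 (G : Type*) [Group G] [Fintype G]
    (h : Nat.card {H : Subgroup G // IsCyclic H} = Nat.card G - 1) :
    ∃! H : Subgroup G, IsCyclic H ∧ Nat.totient (Nat.card H) = 2 ∧
      Nat.card H ∈ ({3, 4, 6} : Set ℕ) ∧
      ∀ K : Subgroup G, IsCyclic K → K ≠ H →
        Nat.card K = 1 ∨ Nat.card K = 2 := by
  classical
  set C := {H : Subgroup G // IsCyclic H} with hC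
  set t : C → ℕ := fun H => Nat.totient (Nat.card H.1) with ht
  set f : G → C := fun g => ⟨Subgroup.zpowers g, zpowers_isCyclic' g⟩ with hf
  have hsum : Fintype.card G = ∑ H : C, t H := by
    rw [← Fintype.card_congr (Equiv.sigmaFiberEquiv f), Fintype.card_sigma]
    refine Finset.sum_congr rfl fun H _ => ?_
    have e' : {g : G // f g = H} ≃ {g : G // Subgroup.zpowers g = H.1} :=
      Equiv.subtypeEquivRight (fun g => by rw [hf]; exact Subtype.ext_iff)
    rw [← Nat.card_eq_fintype_card, Nat.card_congr e', fiber_card H.1 H.2]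
  have hpos : ∀ H : C, 1 ≤ t H := fun H => Nat.totient_pos.2 Nat.card_pos
  have hcardC : (Finset.univ : Finset C).card = Fintype.card G - 1 := by
    rw [Nat.card_eq_fintype_card, Nat.card_eq_fintype_card] at h
    exact h
  have hGpos : 1 ≤ Fintype.card G := Fintype.card_pos
  have hsum1 : ∑ H : C, (t H - 1) = 1 := by
    have h2 : ∑ H : C, (t H - 1 + 1) = ∑ H : C, t H :=
      Finset.sum_congr rfl fun H _ => by have := hpos H; omega
    rw [Finset.sum_add_distrib, Finset.sum_const, smul_eq_mul, mul_one, hcardC] at h2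
    omega
  obtain ⟨H0, -, hH0⟩ :=
    Finset.exists_ne_zero_of_sum_ne_zero (f := fun H : C => t H - 1) (by rw [hsum1]; norm_num)
  have hH0le : t H0 - 1 ≤ 1 := hsum1 ▸ Finset.single_le_sum (f := fun H : C => t H - 1)
      (fun i _ => Nat.zero_le _) (Finset.mem_univ H0)
  have ht2 : t H0 = 2 := by have := hpos H0; omega
  have hrest : ∀ K : C, K ≠ H0 → t K = 1 := by
    intro K hK
    have hs := hsum1
    rw [← Finset.add_sum_erase _ _ (Finset.mem_univ H0)] at hs
    have herase : ∑ H ∈ Finset.univ.erase H0, (t H - 1) = 0 := by omega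
    have := (Finset.sum_eq_zero_iff.1 herase) K (Finset.mem_erase.2 ⟨hK, Finset.mem_univ K⟩)
    have := hpos K; omega
  have hmain : ∀ K : Subgroup G, IsCyclic K → K ≠ H0.1 →
      Nat.card K = 1 ∨ Nat.card K = 2 := by
    intro K hK hne
    have h1 := hrest ⟨K, hK⟩ (fun hEq => hne (congrArg Subtype.val hEq))
    exact Nat.totient_eq_one_iff.1 h1
  refine ⟨H0.1, ⟨H0.2, ht2, totient_two_mem ht2, hmain⟩, ?_⟩
  rintro H' ⟨hcyc', ht2', -, -⟩
  by_contra hne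
  rcases hmain H' hcyc' hne with h1 | h1 <;> rw [h1] at ht2' <;> simp at ht2'
end

section
/- Let G be a finite group with a normal cyclic subgroup H of order 3 such that G has no element of order 6, and suppose G = HK where K is a Sylow 2-subgroup with K ≠ 1. Then C_K(H) = 1, |K| = 2, and G is isomorphic to S_3. -/
/-!
An element of order 2 in `C_K(H)` would multiply a generator of `H` to an element of order 6,
so `C_K(H) = 1`. The normal core of `K` is a normal subgroup meeting `H` trivially, hence it
centralizes `H` and is trivial; so `G` acts faithfully on the three cosets of `K`, and
`3 * |K| = |G| ≤ 3!` forces `|K| = 2` and `G ≅ S₃`.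
-/

open Subgroup Nat

theorem Subgroup.centralizer_inf_eq_bot_of_orderOf_ne_mul {G : Type*} [Group G] [Finite G]
    {p q : ℕ} [Fact p.Prime] [Fact q.Prime] (hpq : p ≠ q) {H K : Subgroup G}
    (hH : p ∣ Nat.card H) (hK : IsPGroup q K) (hG : ∀ g : G, orderOf g ≠ p * q) :
    centralizer (H : Set G) ⊓ K = ⊥ := by
  by_contra hne
  have hq : q ∣ Nat.card (centralizer (H : Set G) ⊓ K : Subgroup G) :=
    hK.to_inf_right.card_eq_or_dvd.resolve_left (by rwa [card_eq_one])
  obtain ⟨y, hy⟩ := exists_prime_orderOf_dvd_card' q hq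
  obtain ⟨x, hx⟩ := exists_prime_orderOf_dvd_card' p hH
  have hxy : Commute (x : G) y := mem_centralizer_iff.mp (mem_inf.mp y.2).1 x x.2
  have hcop : (orderOf (x : G)).Coprime (orderOf (y : G)) := by
    rw [orderOf_coe, orderOf_coe, hx, hy]
    exact (Nat.coprime_primes Fact.out Fact.out).mpr hpq
  apply hG (x * y)
  rw [hxy.orderOf_mul_eq_mul_orderOf_of_coprime hcop, orderOf_coe, orderOf_coe, hx, hy]

theorem Subgroup.le_centralizer_of_normal_of_disjoint {G : Type*} [Group G] {H N : Subgroup G}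
    [H.Normal] [N.Normal] (hHN : Disjoint H N) : N ≤ centralizer (H : Set G) :=
  fun _ hn _ hh ↦ commute_of_normal_of_disjoint H N inferInstance inferInstance hHN _ _ hh hn

theorem Subgroup.normalCore_eq_bot_of_centralizer_inf_eq_bot {G : Type*} [Group G]
    {H K : Subgroup G} [H.Normal] (hHK : Disjoint H K) (hK : centralizer (H : Set G) ⊓ K = ⊥) :
    K.normalCore = ⊥ :=
  eq_bot_iff.mpr <| hK ▸ le_inf
    (le_centralizer_of_normal_of_disjoint (hHK.mono_right K.normalCore_le)) K.normalCore_le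

section PermCosets

variable {G : Type*} [Group G] {K : Subgroup G}

theorem Subgroup.injective_toPermHom_of_normalCore_eq_bot (hK : K.normalCore = ⊥) :
    Function.Injective (MulAction.toPermHom G (G ⧸ K)) := by
  rw [← MonoidHom.ker_eq_bot_iff, ← normalCore_eq_ker, hK]

theorem Subgroup.card_le_factorial_index_of_normalCore_eq_bot [Finite G]
    (hK : K.normalCore = ⊥) : Nat.card G ≤ K.index ! := by
  rw [index, ← Nat.card_perm]
  exact Nat.card_le_card_of_injective _ (injective_toPermHom_of_normalCore_eq_bot hK)

theorem Subgroup.nonempty_mulEquiv_perm_of_normalCore_eq_bot [Finite G] {n : ℕ}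
    (hK : K.normalCore = ⊥) (hn : K.index = n) (hG : Nat.card G = n !) :
    Nonempty (G ≃* Equiv.Perm (Fin n)) := by
  have hbij : Function.Bijective (MulAction.toPermHom G (G ⧸ K)) := by
    rw [Nat.bijective_iff_injective_and_card, Nat.card_perm, ← index, hn, hG]
    exact ⟨injective_toPermHom_of_normalCore_eq_bot hK, rfl⟩
  obtain ⟨e⟩ : Nonempty (G ⧸ K ≃ Fin n) :=
    Finite.card_eq.mp (by rw [Nat.card_fin, ← index, hn])
  exact ⟨(MulEquiv.ofBijective _ hbij).trans (Equiv.permCongrHom e)⟩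

end PermCosets

theorem stmt_8_general (G : Type*) [Group G] [Fintype G] (H : Subgroup G)
    (hN : H.Normal) (hcard : Nat.card H = 3)
    (hno6 : ∀ g : G, orderOf g ≠ 6)
    (K : Sylow 2 G) (hK : (K : Subgroup G) ≠ ⊥)
    (hHK : H ⊔ (K : Subgroup G) = ⊤) :
    Subgroup.centralizer (H : Set G) ⊓ (K : Subgroup G) = ⊥ ∧
    Nat.card (K : Subgroup G) = 2 ∧
    Nonempty (G ≃* Equiv.Perm (Fin 3)) := by
  have hdisj : Disjoint H K :=
    IsPGroup.disjoint_of_ne 3 2 (by norm_num) H K (.of_card (n := 1) hcard) K.isPGroup'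
  have hcomp : IsComplement' H K := isComplement'_of_disjoint_and_mul_eq_univ hdisj
    (by rw [← normal_mul, hHK, coe_top])
  have hC : centralizer (H : Set G) ⊓ K = ⊥ :=
    centralizer_inf_eq_bot_of_orderOf_ne_mul (p := 3) (by norm_num) (by rw [hcard])
      K.isPGroup' hno6
  have hcore := normalCore_eq_bot_of_centralizer_inf_eq_bot hdisj hC
  have hindex : (K : Subgroup G).index = 3 := hcomp.index_eq_card.trans hcard
  have hG : Nat.card G = 3 * Nat.card K := hcard ▸ hcomp.card_mul_card.symm
  have hK1 : 1 < Nat.card K := (one_lt_card_iff_ne_bot _).mpr hK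
  have hle := card_le_factorial_index_of_normalCore_eq_bot hcore
  rw [hindex, hG] at hle
  have hK2 : Nat.card K = 2 := by have : 3 ! = 6 := rfl; omega
  exact ⟨hC, hK2,
    nonempty_mulEquiv_perm_of_normalCore_eq_bot hcore hindex (by rw [hG, hK2]; rfl)⟩

theorem stmt_8 (G : Type*) [Group G] [Fintype G] (H : Subgroup G)
    (hN : H.Normal) (hH : IsCyclic H) (hcard : Nat.card H = 3)
    (hno6 : ∀ g : G, orderOf g ≠ 6)
    (K : Sylow 2 G) (hK : (K : Subgroup G) ≠ ⊥)
    (hHK : H ⊔ (K : Subgroup G) = ⊤) :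
    Subgroup.centralizer (H : Set G) ⊓ (K : Subgroup G) = ⊥ ∧
    Nat.card (K : Subgroup G) = 2 ∧
    Nonempty (G ≃* Equiv.Perm (Fin 3)) :=
  stmt_8_general G H hN hcard hno6 K hK hHK
end

section
/- Let G be a finite 2-group containing a cyclic subgroup H of order 4 such that every element of G outside H is an involution and G ≠ H. Then G is isomorphic to the dihedral group of order 8. -/
theorem stmt_9 (G : Type*) [Group G] [Fintype G] (hG : IsPGroup 2 G)
    (H : Subgroup G) (hH : IsCyclic H) (hcard : Nat.card H = 4)
    (hinv : ∀ g : G, g ∉ H → g ^ 2 = 1) (hne : H ≠ ⊤) :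
    Nonempty (G ≃* DihedralGroup 4) := by
  obtain ⟨x0, hx0⟩ := hH.exists_generator
  set x : G := (x0 : G) with hxdef
  have hxH : x ∈ H := x0.2
  have hordx : orderOf x = 4 := by
    have h1 := orderOf_injective H.subtype H.subtype_injective x0
    simp only [Subgroup.coe_subtype] at h1
    show orderOf (x0 : G) = 4
    rw [h1, orderOf_eq_card_of_forall_mem_zpowers hx0, hcard]
  -- t outside H
  have : ∃ t : G, t ∉ H := by
    by_contra h; push_neg at h; exact hne ((Subgroup.eq_top_iff' H).2 h)
  obtain ⟨t, htH⟩ := this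
  have hginv : ∀ g : G, g ∉ H → g⁻¹ = g := by
    intro g hg
    have := hinv g hg
    rw [pow_two] at this
    exact inv_eq_of_mul_eq_one_right this
  have hconj : ∀ g : G, g ∉ H → g * x * g = x⁻¹ := by
    intro g hg
    have hgx : g * x ∉ H := by
      intro h
      exact hg (by simpa using H.mul_mem h (H.inv_mem hxH))
    have h := hinv (g * x) hgx
    rw [pow_two] at h
    exact eq_inv_of_mul_eq_one_left (by rw [mul_assoc]; exact h)
  have htxt : t * x * t⁻¹ = x⁻¹ := by rw [hginv t htH]; exact hconj t htH
  have hx2 : x * x ≠ 1 := by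
    intro h
    have : orderOf x ∣ 2 := orderOf_dvd_of_pow_eq_one (by rw [pow_two]; exact h)
    rw [hordx] at this; omega
  have hGT : ∀ g : G, g ∉ H → g * t ∈ H := by
    intro g hg
    by_contra hgt
    have e1 := hconj (g * t) hgt
    have e2 := hconj g hg
    have e3 := hconj t htH
    have hgt2 : g * t = t * g := by
      have h := hginv (g * t) hgt
      rw [mul_inv_rev, hginv g hg, hginv t htH] at h
      exact h.symm
    have key : (g * t) * x * (g * t) = x := by
      nth_rewrite 2 [hgt2]
      have h5 : g * t * x * (t * g) = g * (t * x * t) * g := by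
        simp [mul_assoc]
      rw [h5, e3]
      have h6 : g * x⁻¹ * g = (g * x * g)⁻¹ := by
        rw [mul_inv_rev, mul_inv_rev, hginv g hg]; group
      rw [h6, e2, inv_inv]
    rw [key] at e1
    exact hx2 (mul_eq_one_iff_eq_inv.mpr e1)
  -- conjugation on powers
  have h0 : t * x⁻¹ * t⁻¹ = x := by
    have h := congrArg (·⁻¹) htxt
    simp only [mul_inv_rev, inv_inv] at h
    rw [mul_assoc]; exact h
  have hcomm : ∀ n : ℕ, x ^ n * t = t * (x ^ n)⁻¹ := by
    intro n
    have h1 : t * (x ^ n)⁻¹ * t⁻¹ = x ^ n := by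
      calc t * (x ^ n)⁻¹ * t⁻¹ = (t * x⁻¹ * t⁻¹) ^ n := by rw [conj_pow, inv_pow]
        _ = x ^ n := by rw [h0]
    calc x ^ n * t = (t * (x ^ n)⁻¹ * t⁻¹) * t := by rw [h1]
      _ = t * (x ^ n)⁻¹ := by group
  have hcommz : ∀ k : ℤ, x ^ k * t = t * (x ^ k)⁻¹ := by
    intro k
    have h1 : t * (x ^ k)⁻¹ * t⁻¹ = x ^ k := by
      calc t * (x ^ k)⁻¹ * t⁻¹ = (t * x⁻¹ * t⁻¹) ^ k := by rw [conj_zpow, inv_zpow]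
        _ = x ^ k := by rw [h0]
    calc x ^ k * t = (t * (x ^ k)⁻¹ * t⁻¹) * t := by rw [h1]
      _ = t * (x ^ k)⁻¹ := by group
  have htt : t * t = 1 := by
    have := hinv t htH; rwa [pow_two] at this
  -- power arithmetic in ZMod 4
  have hval : ∀ a b : ZMod 4, x ^ a.val * x ^ b.val = x ^ (a + b).val := by
    intro a b
    rw [← pow_add, ZMod.val_add]
    have h := pow_mod_orderOf x (a.val + b.val)
    rw [hordx] at h
    exact h.symm
  have hvalneg : ∀ a : ZMod 4, (x ^ a.val)⁻¹ = x ^ (-a).val := by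
    intro a
    have : x ^ a.val * x ^ (-a).val = 1 := by
      rw [hval, add_neg_cancel, ZMod.val_zero, pow_zero]
    exact (inv_eq_of_mul_eq_one_right this)
  have hzp : ∀ k : ℤ, x ^ ((k : ZMod 4)).val = x ^ k := by
    intro k
    rw [← zpow_natCast, ZMod.val_intCast]
    show x ^ (k % ((4:ℕ):ℤ)) = x ^ k
    rw [← hordx, zpow_mod_orderOf]
  -- val injectivity of powers
  have hvi : ∀ a b : ZMod 4, x ^ a.val = x ^ b.val → a = b := by
    intro a b h
    have ha : a.val < orderOf x := by rw [hordx]; exact a.val_lt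
    have hb : b.val < orderOf x := by rw [hordx]; exact b.val_lt
    exact ZMod.val_injective 4 (pow_injOn_Iio_orderOf ha hb h)
  -- the map
  set f : DihedralGroup 4 → G := fun d => match d with
    | DihedralGroup.r i => x ^ i.val
    | DihedralGroup.sr i => t * x ^ i.val with hf
  have hmul : ∀ a b : DihedralGroup 4, f (a * b) = f a * f b := by
    intro a b
    cases a with
    | r i => cases b with
      | r j =>
        show x ^ (i + j).val = x ^ i.val * x ^ j.val
        rw [hval]
      | sr j =>
        show t * x ^ (j - i).val = x ^ i.val * (t * x ^ j.val)
        rw [sub_eq_neg_add, ← hval, ← mul_assoc, ← hvalneg, ← hcomm, mul_assoc]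
    | sr i => cases b with
      | r j =>
        show t * x ^ (i + j).val = t * x ^ i.val * x ^ j.val
        rw [mul_assoc, hval]
      | sr j =>
        show x ^ (j - i).val = t * x ^ i.val * (t * x ^ j.val)
        rw [sub_eq_neg_add, ← hval, ← hvalneg]
        calc (x ^ i.val)⁻¹ * x ^ j.val = t * t * (x ^ i.val)⁻¹ * x ^ j.val := by
              rw [htt, one_mul]
          _ = t * (x ^ i.val * t) * x ^ j.val := by rw [hcomm]; group
          _ = t * x ^ i.val * (t * x ^ j.val) := by group
  have hinj : Function.Injective f := by
    intro a b h
    cases a with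
    | r i => cases b with
      | r j => exact congrArg DihedralGroup.r (hvi i j h)
      | sr j =>
        exfalso
        have : t = x ^ i.val * (x ^ j.val)⁻¹ := by
          rw [eq_mul_inv_iff_mul_eq]; exact h.symm
        exact htH (this ▸ H.mul_mem (H.pow_mem hxH _) (H.inv_mem (H.pow_mem hxH _)))
    | sr i => cases b with
      | r j =>
        exfalso
        have : t = x ^ j.val * (x ^ i.val)⁻¹ := by
          rw [eq_mul_inv_iff_mul_eq]; exact h
        exact htH (this ▸ H.mul_mem (H.pow_mem hxH _) (H.inv_mem (H.pow_mem hxH _)))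
      | sr j =>
        exact congrArg DihedralGroup.sr (hvi i j (mul_left_cancel h))
  have hsurj : Function.Surjective f := by
    intro g
    by_cases hg : g ∈ H
    · obtain ⟨k, hk⟩ := hx0 ⟨g, hg⟩
      have hk' : x ^ k = g := by
        have := congrArg (Subgroup.subtype H) hk
        simpa using this
      exact ⟨DihedralGroup.r (k : ZMod 4), by show x ^ _ = g; rw [hzp]; exact hk'⟩
    · obtain ⟨k, hk⟩ := hx0 ⟨g * t, hGT g hg⟩
      have hk' : x ^ k = g * t := by
        have := congrArg (Subgroup.subtype H) hk
        simpa using this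
      refine ⟨DihedralGroup.sr ((-k : ℤ) : ZMod 4), ?_⟩
      show t * x ^ (((-k : ℤ) : ZMod 4)).val = g
      rw [hzp, zpow_neg, ← hcommz, hk', mul_assoc, htt, mul_one]
  exact ⟨(MulEquiv.mk (Equiv.ofBijective f ⟨hinj, hsurj⟩) hmul).symm⟩
end

section
/- The symmetric group S_3 is the unique finite group G (up to isomorphism) that is not a p-group for any prime p and satisfies |C(G)| = |G| - 1. -/
/-!
Send every element `g` to the cyclic subgroup `⟨g⟩`. This map is onto `C(G)` and identifies
`g` with `g⁻¹`, so `|C(G)| = |G| - 1` says that it is injective off a single point: there is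
an `a` with `a² ≠ 1` such that every element other than `a, a⁻¹` is an involution. As `G` is
neither a `2`-group nor a `3`-group, `a` has order `3` and some involution `t` lies outside
`⟨a⟩`. Every element outside `⟨a⟩` inverts `a`, so the product of two of them centralises `a`
and lies in `⟨a⟩`; hence `⟨a⟩` has index `2` and `|G| = 6`. Finally `G` acts faithfully on
the three cosets of `⟨t⟩`, because `t` is not central.
-/

open Subgroup Equiv Function

theorem Function.Surjective.card_add_one_eq_iff {α β : Type*} [Finite α] {f : α → β}
    (hf : Surjective f) :
    Nat.card β + 1 = Nat.card α ↔ ∃ x y, x ≠ y ∧ f x = f y ∧ Set.InjOn f {x}ᶜ := by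
  classical
  have hcompl (x : α) : Nat.card {z // z ≠ x} + 1 = Nat.card α := by
    rw [← Finite.card_option]
    exact Nat.card_congr (optionSubtypeNe x)
  have hsurj {x y : α} (hxy : x ≠ y) (hfxy : f x = f y) :
      Surjective fun z : {z // z ≠ x} => f z := by
    intro b
    obtain ⟨z, rfl⟩ := hf b
    by_cases hz : z = x
    · exact ⟨⟨y, hxy.symm⟩, by rw [hz, hfxy]⟩
    · exact ⟨⟨z, hz⟩, rfl⟩
  constructor
  · intro hcard
    obtain ⟨x, y, hfxy, hxy⟩ : ∃ x y, f x = f y ∧ x ≠ y := by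
      by_contra! hinj
      have := Nat.card_eq_of_bijective f ⟨fun x y h => hinj x y h, hf⟩
      omega
    have hbij := (hsurj hxy hfxy).bijective_of_nat_card_le (by have := hcompl x; omega)
    exact ⟨x, y, hxy, hfxy, fun z hz w hw h =>
      congrArg Subtype.val (@hbij.1 ⟨z, hz⟩ ⟨w, hw⟩ h)⟩
  · rintro ⟨x, y, hxy, hfxy, hinj⟩
    have hbij : Bijective fun z : {z // z ≠ x} => f z :=
      ⟨fun z w h => Subtype.ext (hinj z.2 w.2 h), hsurj hxy hfxy⟩
    rw [← hcompl x, Nat.card_eq_of_bijective _ hbij]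

section

variable {G : Type*} [Group G]

theorem eq_one_or_eq_of_mem_zpowers {t g : G} (ht : t * t = 1) (hg : g ∈ zpowers t) :
    g = 1 ∨ g = t := by
  obtain ⟨k, rfl⟩ := mem_zpowers_iff.1 hg
  have ht2 : t ^ (2 : ℤ) = 1 := by rw [zpow_two, ht]
  rcases Int.even_or_odd' k with ⟨m, rfl | rfl⟩
  · left
    rw [zpow_mul, ht2, one_zpow]
  · right
    rw [zpow_add, zpow_mul, ht2, one_zpow, one_mul, zpow_one]

theorem eq_of_zpowers_eq {t g : G} (ht : t * t = 1) (h : zpowers g = zpowers t) : g = t := by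
  rcases eq_one_or_eq_of_mem_zpowers ht (h ▸ mem_zpowers g) with rfl | rfl
  · rw [zpowers_one_eq_bot, eq_comm, zpowers_eq_bot] at h
    exact h.symm
  · rfl

variable (G) in
def cyclicZPowers (g : G) : {H : Subgroup G // IsCyclic H} :=
  ⟨zpowers g, isCyclic_zpowers g⟩

theorem cyclicZPowers_surjective : Surjective (cyclicZPowers G) := by
  rintro ⟨H, hH⟩
  obtain ⟨g, hg⟩ := H.isCyclic_iff_exists_zpowers_eq_top.1 hH
  exact ⟨g, Subtype.ext hg⟩

theorem cyclicZPowers_inv (g : G) : cyclicZPowers G g⁻¹ = cyclicZPowers G g :=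
  Subtype.ext zpowers_inv

theorem injOn_cyclicZPowers_compl_iff {a : G} :
    Set.InjOn (cyclicZPowers G) {a}ᶜ ↔ ∀ g, g ≠ a → g ≠ a⁻¹ → g * g = 1 := by
  constructor
  · intro hinj g hga hgi
    rw [← inv_eq_iff_mul_eq_one]
    exact hinj (inv_eq_iff_eq_inv.not.2 hgi) hga (cyclicZPowers_inv g)
  · intro hinv g hga h hha hgh
    have hgh : zpowers g = zpowers h := congrArg Subtype.val hgh
    by_cases hg : g * g = 1
    · exact (eq_of_zpowers_eq hg hgh.symm).symm
    by_cases hh : h * h = 1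
    · exact eq_of_zpowers_eq hh hgh
    rw [not_imp_comm.1 (hinv g hga) hg, not_imp_comm.1 (hinv h hha) hh]

theorem card_cyclicSubgroups_add_one_eq_iff [Finite G] :
    Nat.card {H : Subgroup G // IsCyclic H} + 1 = Nat.card G ↔
      ∃ a : G, a * a ≠ 1 ∧ ∀ g, g ≠ a → g ≠ a⁻¹ → g * g = 1 := by
  rw [cyclicZPowers_surjective.card_add_one_eq_iff]
  constructor
  · rintro ⟨a, b, hab, hfab, hinj⟩
    have hinv := injOn_cyclicZPowers_compl_iff.1 hinj
    refine ⟨a, fun ha => hab ?_, hinv⟩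
    have hb : b * b = 1 := hinv b hab.symm (by rwa [inv_eq_of_mul_eq_one_right ha, ne_comm])
    exact eq_of_zpowers_eq hb (congrArg Subtype.val hfab)
  · rintro ⟨a, ha, hinv⟩
    exact ⟨a, a⁻¹, fun h => ha (mul_eq_one_iff_eq_inv.2 h), (cyclicZPowers_inv a).symm,
      injOn_cyclicZPowers_compl_iff.2 hinv⟩

theorem commute_mul_of_mul_mul_self_eq_inv {s u a : G} (hs : s * s = 1) (hu : u * u = 1)
    (hsa : s * a * s = a⁻¹) (hua : u * a * u = a⁻¹) : Commute (s * u) a := by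
  have hs' : s * a⁻¹ = a * s := by
    rw [← hsa, ← mul_assoc, ← mul_assoc, hs, one_mul]
  have hu' : u * a = a⁻¹ * u := by
    rw [← hua, mul_assoc (u * a), hu, mul_one]
  calc s * u * a = s * a⁻¹ * u := by rw [mul_assoc, hu', mul_assoc]
    _ = a * (s * u) := by rw [hs', mul_assoc]

theorem isPGroup_of_pow_eq_one_of_ne {p k m : ℕ} {a : G} (ha : a ^ p ^ k = 1)
    (hg : ∀ g, g ≠ a → g ≠ a⁻¹ → g ^ p ^ m = 1) : IsPGroup p G := by
  intro g
  by_cases hga : g = a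
  · exact ⟨k, hga ▸ ha⟩
  by_cases hgi : g = a⁻¹
  · exact ⟨k, by rw [hgi, inv_pow, ha, inv_one]⟩
  exact ⟨m, hg g hga hgi⟩

section Involutions

variable {a : G}

theorem mul_self_eq_one_of_notMem_zpowers (hinv : ∀ g, g ≠ a → g ≠ a⁻¹ → g * g = 1) {g : G}
    (hg : g ∉ zpowers a) : g * g = 1 :=
  hinv g (fun h => hg (h ▸ mem_zpowers a)) (fun h => hg (h ▸ inv_mem (mem_zpowers a)))

theorem mul_mul_self_eq_inv_of_notMem_zpowers (hinv : ∀ g, g ≠ a → g ≠ a⁻¹ → g * g = 1)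
    {g : G} (hg : g ∉ zpowers a) : g * a * g = a⁻¹ := by
  have hga : g * a ∉ zpowers a :=
    ((zpowers a).mul_mem_cancel_right (mem_zpowers a)).not.2 hg
  refine eq_inv_of_mul_eq_one_left ?_
  rw [← mul_self_eq_one_of_notMem_zpowers hinv hga]
  simp only [mul_assoc]

theorem mem_zpowers_of_commute (ha : a * a ≠ 1) (hinv : ∀ g, g ≠ a → g ≠ a⁻¹ → g * g = 1)
    {g : G} (hg : Commute g a) : g ∈ zpowers a := by
  by_contra hg'
  have h := mul_mul_self_eq_inv_of_notMem_zpowers hinv hg'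
  rw [hg.eq, mul_assoc, mul_self_eq_one_of_notMem_zpowers hinv hg', mul_one] at h
  exact ha (mul_eq_one_iff_eq_inv.2 h)

theorem index_zpowers_eq_two (ha : a * a ≠ 1) (hinv : ∀ g, g ≠ a → g ≠ a⁻¹ → g * g = 1)
    {t : G} (ht : t ∉ zpowers a) : (zpowers a).index = 2 := by
  refine index_eq_two_iff.2 ⟨t, fun b => ?_⟩
  by_cases hb : b ∈ zpowers a
  · exact Or.inr ⟨hb, ((zpowers a).mul_mem_cancel_left hb).not.2 ht⟩
  · refine Or.inl ⟨mem_zpowers_of_commute ha hinv ?_, hb⟩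
    exact commute_mul_of_mul_mul_self_eq_inv
      (mul_self_eq_one_of_notMem_zpowers hinv hb) (mul_self_eq_one_of_notMem_zpowers hinv ht)
      (mul_mul_self_eq_inv_of_notMem_zpowers hinv hb)
      (mul_mul_self_eq_inv_of_notMem_zpowers hinv ht)

theorem pow_three_eq_one (ha : a * a ≠ 1) (hinv : ∀ g, g ≠ a → g ≠ a⁻¹ → g * g = 1)
    (h2 : ¬IsPGroup 2 G) : a ^ 3 = 1 := by
  by_contra h3
  have ha2 : a * a ≠ a := fun h => ha (by rw [mul_eq_left.1 h, one_mul])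
  have ha2' : a * a ≠ a⁻¹ := fun h => h3 (by rw [pow_succ, sq, h, inv_mul_cancel])
  refine h2 (isPGroup_of_pow_eq_one_of_ne (a := a) (k := 2) (m := 1) ?_ ?_)
  · rw [show 2 ^ 2 = 2 * 2 from rfl, pow_mul, sq, sq]
    exact hinv _ ha2 ha2'
  · intro g hga hgi
    rw [pow_one, sq]
    exact hinv g hga hgi

theorem exists_notMem_zpowers (hinv : ∀ g, g ≠ a → g ≠ a⁻¹ → g * g = 1) (h3 : a ^ 3 = 1)
    (hp3 : ¬IsPGroup 3 G) : ∃ t, t ∉ zpowers a := by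
  by_contra! hcyc
  refine hp3 (isPGroup_of_pow_eq_one_of_ne (a := a) (k := 1) (m := 0) 
    (by rwa [pow_one]) ?_)
  intro g hga hgi
  obtain ⟨k, rfl⟩ := mem_zpowers_iff.1 (hcyc g)
  have hk3 : (a ^ k) ^ 3 = 1 := by
    rw [← zpow_natCast, ← zpow_mul, mul_comm, zpow_mul, zpow_natCast, h3, one_zpow]
  rw [pow_zero, pow_one, ← hk3, pow_succ, sq, hinv _ hga hgi, one_mul]

theorem card_eq_six (ha : a * a ≠ 1) (hinv : ∀ g, g ≠ a → g ≠ a⁻¹ → g * g = 1)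
    (h3 : a ^ 3 = 1) {t : G} (ht : t ∉ zpowers a) : Nat.card G = 6 := by
  have ha1 : a ≠ 1 := by
    rintro rfl
    exact ha (mul_one 1)
  rw [← index_mul_card (zpowers a), index_zpowers_eq_two ha hinv ht, Nat.card_zpowers,
    orderOf_eq_prime h3 ha1]

end Involutions

theorem not_isPGroup_of_card_eq_six {p : ℕ} (hp : p.Prime) (hcard : Nat.card G = 6) :
    ¬IsPGroup p G := by
  have : Fact p.Prime := ⟨hp⟩
  have : Finite G := Nat.finite_of_card_ne_zero (by omega)
  rw [IsPGroup.iff_card, hcard]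
  rintro ⟨n, hn⟩
  have h2 : 2 = p := (Nat.prime_dvd_prime_iff_eq Nat.prime_two hp).1
    (Nat.prime_two.dvd_of_dvd_pow (by rw [← hn]; norm_num))
  have h3 : 3 = p := (Nat.prime_dvd_prime_iff_eq Nat.prime_three hp).1
    (Nat.prime_three.dvd_of_dvd_pow (by rw [← hn]; norm_num))
  omega

theorem nonempty_mulEquiv_perm_fin_three (hcard : Nat.card G = 6) {a t : G} (ht : t * t = 1)
    (hat : ¬Commute a t) : Nonempty (G ≃* Perm (Fin 3)) := by
  have : Finite G := Nat.finite_of_card_ne_zero (by omega)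
  have ht1 : t ≠ 1 := by
    rintro rfl
    exact hat (Commute.one_right a)
  have hQ : Nat.card (G ⧸ zpowers t) = 3 := by
    have h := index_mul_card (zpowers t)
    rw [index_eq_card, Nat.card_zpowers, orderOf_eq_prime (by rwa [sq]) ht1, hcard] at h
    omega
  have hcore : (zpowers t).normalCore = ⊥ := by
    refine (eq_bot_iff_forall _).2 fun g hg => ?_
    refine (eq_one_or_eq_of_mem_zpowers ht (normalCore_le _ hg)).resolve_right ?_
    rintro rfl
    have hconj := normalCore_le _ ((normalCore_normal _).conj_mem g hg a)
    rcases eq_one_or_eq_of_mem_zpowers ht hconj with h | h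
    · exact ht1 (by simpa using h)
    · exact hat (mul_inv_eq_iff_eq_mul.1 h)
  have hinj : Injective (MulAction.toPermHom G (G ⧸ zpowers t)) := by
    rw [← MonoidHom.ker_eq_bot_iff, ← normalCore_eq_ker, hcore]
  have hbij := hinj.bijective_of_nat_card_le (by rw [Nat.card_perm, hQ, hcard]; rfl)
  exact ⟨(MulEquiv.ofBijective _ hbij).trans (permCongrHom (Finite.equivFinOfCardEq hQ))⟩

end

theorem stmt_11 :
    (¬ ∃ p : ℕ, p.Prime ∧ IsPGroup p (Equiv.Perm (Fin 3))) ∧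
    Nat.card {H : Subgroup (Equiv.Perm (Fin 3)) // IsCyclic H} =
      Nat.card (Equiv.Perm (Fin 3)) - 1 ∧
    ∀ (G : Type) [Group G] [Fintype G],
      (¬ ∃ p : ℕ, p.Prime ∧ IsPGroup p G) →
      Nat.card {H : Subgroup G // IsCyclic H} = Nat.card G - 1 →
      Nonempty (G ≃* Equiv.Perm (Fin 3)) := by
  have hS3 : Nat.card (Perm (Fin 3)) = 6 := by
    rw [Nat.card_perm, Nat.card_fin]
    rfl
  refine ⟨fun ⟨p, hp, h⟩ => not_isPGroup_of_card_eq_six hp hS3 h, ?_, ?_⟩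
  · have := card_cyclicSubgroups_add_one_eq_iff (G := Perm (Fin 3)) |>.2
      ⟨finRotate 3, by decide, by decide⟩
    omega
  · intro G _ _ hnp hc
    have hnp' (p : ℕ) (hp : p.Prime) : ¬IsPGroup p G := fun h => hnp ⟨p, hp, h⟩
    obtain ⟨a, ha, hinv⟩ := card_cyclicSubgroups_add_one_eq_iff (G := G) |>.1
      (by have := Nat.card_pos (α := G); omega)
    have h3 := pow_three_eq_one ha hinv (hnp' 2 Nat.prime_two)
    obtain ⟨t, ht⟩ := exists_notMem_zpowers hinv h3 (hnp' 3 Nat.prime_three)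
    exact nonempty_mulEquiv_perm_fin_three (card_eq_six ha hinv h3 ht)
      (mul_self_eq_one_of_notMem_zpowers hinv ht)
      fun h => ht (mem_zpowers_of_commute ha hinv h.symm)
end
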